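/- Let N ∈ ℕ and let h₁,…,h_N ∈ ℂ be window weights with Σ_n |h_n|² = 1. For all ω₁, ω₂ ∈ ℝ, the minimum over all (g₁,g₂) ∈ ℂ² with |g₁|² + |g₂|² = 1 of ‖g₁ x(ω₁) + g₂ x(ω₂)‖² equals 1 − |H(ω₁ − ω₂)|, where H(ω) = Σ_{n=1}^N |h_n|² e^{iω(n−(N+1)/2)}. That is, the squared smallest singular value of the matrix [x(ω₁) x(ω₂)] equals 1 − |H(ω₁−ω₂)|. -/

import Mathlib

open scoped BigOperators

/-- `c_n = n − (N+1)/2` for `n = 1,…,N` (here `n : Fin N` is zero-based). -/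
noncomputable def cN (N : ℕ) (n : Fin N) : ℝ := ((n : ℝ) + 1) - ((N : ℝ) + 1) / 2

/-- Windowed sinusoid: `n`-th entry `h_n e^{iω c_n}`. -/
noncomputable def sinusoid {N : ℕ} (h : Fin N → ℂ) (ω : ℝ) : EuclideanSpace ℂ (Fin N) :=
  WithLp.toLp 2 fun n => h n * Complex.exp (Complex.I * (ω * cN N n))

/-- `H(ω) = Σ_n |h_n|² e^{iω c_n}`. -/
noncomputable def Hfun {N : ℕ} (h : Fin N → ℂ) (ω : ℝ) : ℂ :=
  ∑ n, (‖h n‖ ^ 2 : ℂ) * Complex.exp (Complex.I * (ω * cN N n))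

/-!
For unit vectors `x`, `y` and `|a|² + |b|² = 1` one has
`‖a x + b y‖² = 1 + 2 Re(ā b ⟪x, y⟫) ≥ 1 − 2 |a| |b| |⟪x, y⟫| ≥ 1 − |⟪x, y⟫|`,
with equality for `|a| = |b| = 1/√2` and the phase of `ā b` opposite to that of `⟪x, y⟫`.
For the windowed sinusoids, `⟪x(ω₁), x(ω₂)⟫ = H(ω₂ − ω₁)`, and the normalisation of the window
makes every `x(ω)` a unit vector.
-/

open RCLike ComplexConjugate
open scoped InnerProductSpace

section TwoUnitVectors

variable {𝕜 E : Type*} [RCLike 𝕜] [NormedAddCommGroup E] [InnerProductSpace 𝕜 E]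

lemma norm_smul_add_smul_sq_of_norm_eq_one {x y : E} (hx : ‖x‖ = 1) (hy : ‖y‖ = 1) (a b : 𝕜) :
    ‖a • x + b • y‖ ^ 2 = ‖a‖ ^ 2 + ‖b‖ ^ 2 + 2 * re (conj a * b * ⟪x, y⟫_𝕜) := by
  rw [norm_add_sq (𝕜 := 𝕜), inner_smul_left, inner_smul_right, norm_smul, norm_smul, hx, hy,
    mul_assoc]
  ring

lemma isLeast_norm_smul_add_smul_sq {x y : E} (hx : ‖x‖ = 1) (hy : ‖y‖ = 1) :
    IsLeast {t : ℝ | ∃ a b : 𝕜, ‖a‖ ^ 2 + ‖b‖ ^ 2 = 1 ∧ t = ‖a • x + b • y‖ ^ 2}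
      (1 - ‖⟪x, y⟫_𝕜‖) := by
  set c := ⟪x, y⟫_𝕜
  constructor
  · obtain ⟨u, hu, huc⟩ := exists_norm_eq_mul_self c
    set s : ℝ := (√2)⁻¹
    have hs : s ^ 2 = 1 / 2 := by rw [inv_pow, Real.sq_sqrt zero_le_two, one_div]
    have hab : ‖(s : 𝕜)‖ ^ 2 + ‖-((s : 𝕜) * u)‖ ^ 2 = 1 := by
      rw [norm_neg, norm_mul, hu, mul_one, norm_ofReal, sq_abs, hs]
      norm_num
    have hre : re (conj (s : 𝕜) * -((s : 𝕜) * u) * c) = -(‖c‖ / 2) := by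
      rw [conj_ofReal, show (s : 𝕜) * -((s : 𝕜) * u) * c = -((s ^ 2 : ℝ) * (u * c) : 𝕜) by
        push_cast; ring, ← huc, ← ofReal_mul, ← ofReal_neg, ofReal_re, hs]
      ring
    refine ⟨s, -(s * u), hab, ?_⟩
    rw [norm_smul_add_smul_sq_of_norm_eq_one hx hy, hab, hre]
    ring
  · rintro t ⟨a, b, hab, rfl⟩
    have hre : -(‖a‖ * ‖b‖ * ‖c‖) ≤ re (conj a * b * c) := by
      simpa only [norm_mul, norm_conj] using neg_le_of_abs_le (abs_re_le_norm (conj a * b * c))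
    have hamgm : 2 * (‖a‖ * ‖b‖) ≤ 1 := by nlinarith [sq_nonneg (‖a‖ - ‖b‖)]
    rw [norm_smul_add_smul_sq_of_norm_eq_one hx hy, hab]
    nlinarith [norm_nonneg c]

end TwoUnitVectors

section WindowedSinusoid

variable {N : ℕ} (h : Fin N → ℂ)

lemma inner_sinusoid (ω₁ ω₂ : ℝ) :
    inner ℂ (sinusoid h ω₁) (sinusoid h ω₂) = Hfun h (ω₂ - ω₁) := by
  rw [PiLp.inner_apply]
  refine Finset.sum_congr rfl fun n _ => ?_
  simp only [sinusoid, RCLike.inner_apply, map_mul, ← Complex.exp_conj, Complex.conj_I,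
    Complex.conj_ofReal]
  rw [mul_mul_mul_comm, ← Complex.exp_add, Complex.mul_conj']
  congr 2
  push_cast
  ring

lemma norm_sinusoid_sq (ω : ℝ) : ‖sinusoid h ω‖ ^ 2 = ∑ n, ‖h n‖ ^ 2 := by
  rw [EuclideanSpace.norm_sq_eq]
  refine Finset.sum_congr rfl fun n _ => ?_
  rw [sinusoid, PiLp.toLp_apply, norm_mul, mul_comm Complex.I, ← Complex.ofReal_mul,
    Complex.norm_exp_ofReal_mul_I, mul_one]

end WindowedSinusoid

/-- The squared smallest singular value of `[x(ω₁) x(ω₂)]` equals `1 − |H(ω₁ − ω₂)|`: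
the minimum of `‖g₁ x(ω₁) + g₂ x(ω₂)‖²` over `(g₁,g₂) ∈ ℂ²` with `|g₁|² + |g₂|² = 1`. -/
theorem stmt9 {N : ℕ} (h : Fin N → ℂ) (hnorm : ∑ n, ‖h n‖ ^ 2 = 1) (ω₁ ω₂ : ℝ) :
    IsLeast {t : ℝ | ∃ g₁ g₂ : ℂ, ‖g₁‖ ^ 2 + ‖g₂‖ ^ 2 = 1 ∧
        t = ‖g₁ • sinusoid h ω₁ + g₂ • sinusoid h ω₂‖ ^ 2}
      (1 - ‖Hfun h (ω₁ - ω₂)‖) := by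
  have hunit (ω : ℝ) : ‖sinusoid h ω‖ = 1 :=
    (pow_eq_one_iff_of_nonneg (norm_nonneg _) two_ne_zero).mp (by rw [norm_sinusoid_sq, hnorm])
  rw [← inner_sinusoid, norm_inner_symm]
  exact isLeast_norm_smul_add_smul_sq (hunit ω₁) (hunit ω₂)
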